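/- arXiv:1306.4959 — 8 statements merged into one kernel-verified Lean document; each statement's English description precedes it below -/
import Mathlib

section
/- If max(X₁, X₂) = max(X₃, X₄) and max(W₁, W₂) = max(W₃, W₄), then max(X₁+W₁, X₃+W₃, X₂+W₄, X₄+W₂) = max(X₂+W₂, X₄+W₄, X₁+W₃, X₃+W₁). -/
/-!
Since the two pairs of `X`s have the same maximum, every `X` lies below the maximum of the
other pair, and likewise for the `W`s. So for a term `a + b` of one side, either
`a` can be raised to an `X` of the other pair, or `b` to a `W` of the other pair, or both at
once; the three resulting sums all occur on the other side. Exchanging `(W₁, W₂)` with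
`(W₃, W₄)` swaps the two sides, so one inequality suffices.
-/

section LinearOrderedAddMonoid

variable {α : Type*} [AddCommMonoid α] [LinearOrder α] [IsOrderedAddMonoid α]

theorem add_le_of_le_max_of_le_max {a b c d e f z : α} (ha : a ≤ max c d) (hb : b ≤ max e f)
    (hcb : c + b ≤ z) (hae : a + e ≤ z) (hdf : d + f ≤ z) : a + b ≤ z := by
  rcases le_max_iff.mp ha with hac | had
  · exact (add_le_add hac le_rfl).trans hcb
  rcases le_max_iff.mp hb with hbe | hbf
  · exact (add_le_add le_rfl hbe).trans hae
  · exact (add_le_add had hbf).trans hdf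

theorem max_add_le_of_max_eq_max {X₁ X₂ X₃ X₄ W₁ W₂ W₃ W₄ : α}
    (hX : max X₁ X₂ = max X₃ X₄) (hW : max W₁ W₂ = max W₃ W₄) :
    max (max (X₁ + W₁) (X₃ + W₃)) (max (X₂ + W₄) (X₄ + W₂)) ≤
      max (max (X₂ + W₂) (X₄ + W₄)) (max (X₁ + W₃) (X₃ + W₁)) := by
  have hX₁ : X₁ ≤ max X₃ X₄ := hX ▸ le_max_left _ _
  have hX₂ : X₂ ≤ max X₄ X₃ := max_comm X₃ X₄ ▸ hX ▸ le_max_right _ _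
  have hX₃ : X₃ ≤ max X₁ X₂ := hX ▸ le_max_left _ _
  have hX₄ : X₄ ≤ max X₂ X₁ := max_comm X₁ X₂ ▸ hX.symm ▸ le_max_right _ _
  have hW₁ : W₁ ≤ max W₃ W₄ := hW ▸ le_max_left _ _
  have hW₂ : W₂ ≤ max W₄ W₃ := max_comm W₃ W₄ ▸ hW ▸ le_max_right _ _
  have hW₃ : W₃ ≤ max W₁ W₂ := hW ▸ le_max_left _ _
  have hW₄ : W₄ ≤ max W₂ W₁ := max_comm W₁ W₂ ▸ hW.symm ▸ le_max_right _ _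
  refine max_le (max_le ?_ ?_) (max_le ?_ ?_)
  · exact add_le_of_le_max_of_le_max hX₁ hW₁ (by simp) (by simp) (by simp)
  · exact add_le_of_le_max_of_le_max hX₃ hW₃ (by simp) (by simp) (by simp)
  · exact add_le_of_le_max_of_le_max hX₂ hW₄ (by simp) (by simp) (by simp)
  · exact add_le_of_le_max_of_le_max hX₄ hW₂ (by simp) (by simp) (by simp)

end LinearOrderedAddMonoid

theorem ultradiscrete_key_lemma (X₁ X₂ X₃ X₄ W₁ W₂ W₃ W₄ : ℝ)
    (hX : max X₁ X₂ = max X₃ X₄) (hW : max W₁ W₂ = max W₃ W₄) :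
    max (max (X₁ + W₁) (X₃ + W₃)) (max (X₂ + W₄) (X₄ + W₂)) =
      max (max (X₂ + W₂) (X₄ + W₄)) (max (X₁ + W₃) (X₃ + W₁)) := by
  refine le_antisymm (max_add_le_of_max_eq_max hX hW) ?_
  have hswap := max_add_le_of_max_eq_max (W₁ := W₃) (W₂ := W₄) (W₃ := W₁) (W₄ := W₂) hX hW.symm
  rwa [max_comm (max (X₁ + W₃) _), max_comm (max (X₂ + W₄) _)] at hswap
end

section
/- Suppose real numbers Q, A₁, A₂, A₃, A₄, B₁, B₃, B₄ satisfy A₁ + B₃ + Q = A₃ + B₁ and A₂ + B₄ = A₄ + B₂. Fix an integer m and reals Y_m, Y_{m+1}, Z_{m+1}. If the ultradiscrete Riccati relations max(mQ + A₂ + B₄, Y_m + Z_{m+1}) = max(Z_{m+1} + A₄, Y_m + B₄) and max(mQ + A₃ + B₁, Y_{m+1} + Z_{m+1}) = max(Z_{m+1} + A₃, Y_{m+1} + B₃) hold (the case of parity variables 𝔷_{m+1} = 𝔶_m = 𝔶_{m+1} = +1), then max(max(2Z_{m+1}, B₃+B₄) + Y_m + Y_{m+1}, max(B₁,B₂) +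 mQ + Z_{m+1} + A₃ + A₄) = max(max(2mQ + B₁+B₂, 2Z_{m+1}) + A₃ + A₄, max(B₃,B₄) + Y_m + Y_{m+1} + Z_{m+1}). -/
/-!
Both Riccati relations have the shape `max X₁ X₂ = max X₃ X₄`. Two such relations combine into
the eight-term max-plus identity `max_add_eq_max_add_of_max_eq_max`, the tropical counterpart of
`x₁w₁ + x₃w₃ + x₂w₄ + x₄w₂ = x₂w₂ + x₄w₄ + x₁w₃ + x₃w₁` for `x₁ + x₂ = x₃ + x₄`,
`w₁ + w₂ = w₃ + w₄`. Once `B₂` is eliminated through `A₂ + B₄ = A₄ + B₂`, the eight terms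
built from the two Riccati relations regroup into the two sides of the Painlevé relation.
-/

section MaxPlus

variable {α : Type*} [AddCommMonoid α] [LinearOrder α] [IsOrderedAddMonoid α]
  {x₁ x₂ x₃ x₄ w₁ w₂ w₃ w₄ : α}

theorem max_add_le_max_add_of_max_eq_max (hx : max x₁ x₂ = max x₃ x₄)
    (hw : max w₁ w₂ = max w₃ w₄) :
    max (max (x₁ + w₁) (x₃ + w₃)) (max (x₂ + w₄) (x₄ + w₂)) ≤
      max (max (x₂ + w₂) (x₄ + w₄)) (max (x₁ + w₃) (x₃ + w₁)) := by
  have hx₁ : x₁ ≤ x₃ ∨ x₁ ≤ x₄ := le_max_iff.mp (hx ▸ le_max_left x₁ x₂)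
  have hx₂ : x₂ ≤ x₃ ∨ x₂ ≤ x₄ := le_max_iff.mp (hx ▸ le_max_right x₁ x₂)
  have hx₃ : x₃ ≤ x₁ ∨ x₃ ≤ x₂ := le_max_iff.mp (hx.symm ▸ le_max_left x₃ x₄)
  have hx₄ : x₄ ≤ x₁ ∨ x₄ ≤ x₂ := le_max_iff.mp (hx.symm ▸ le_max_right x₃ x₄)
  have hw₁ : w₁ ≤ w₃ ∨ w₁ ≤ w₄ := le_max_iff.mp (hw ▸ le_max_left w₁ w₂)
  have hw₂ : w₂ ≤ w₃ ∨ w₂ ≤ w₄ := le_max_iff.mp (hw ▸ le_max_right w₁ w₂)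
  have hw₃ : w₃ ≤ w₁ ∨ w₃ ≤ w₂ := le_max_iff.mp (hw.symm ▸ le_max_left w₃ w₄)
  have hw₄ : w₄ ≤ w₁ ∨ w₄ ≤ w₂ := le_max_iff.mp (hw.symm ▸ le_max_right w₃ w₄)
  refine max_le (max_le ?_ ?_) (max_le ?_ ?_) <;> simp only [le_max_iff]
  · rcases hw₁ with hw₁ | hw₁
    · exact .inr (.inl (by gcongr))
    rcases hx₁ with hx₁ | hx₁
    · exact .inr (.inr (by gcongr))
    · exact .inl (.inr (by gcongr))
  · rcases hx₃ with hx₃ | hx₃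
    · exact .inr (.inl (by gcongr))
    rcases hw₃ with hw₃ | hw₃
    · exact .inr (.inr (by gcongr))
    · exact .inl (.inl (by gcongr))
  · rcases hw₄ with hw₄ | hw₄
    · rcases hx₂ with hx₂ | hx₂
      · exact .inr (.inr (by gcongr))
      · exact .inl (.inr (by gcongr))
    · exact .inl (.inl (by gcongr))
  · rcases hx₄ with hx₄ | hx₄
    · rcases hw₂ with hw₂ | hw₂
      · exact .inr (.inl (by gcongr))
      · exact .inl (.inr (by gcongr))
    · exact .inl (.inl (by gcongr))

theorem max_add_eq_max_add_of_max_eq_max (hx : max x₁ x₂ = max x₃ x₄)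
    (hw : max w₁ w₂ = max w₃ w₄) :
    max (max (x₁ + w₁) (x₃ + w₃)) (max (x₂ + w₄) (x₄ + w₂)) =
      max (max (x₂ + w₂) (x₄ + w₄)) (max (x₁ + w₃) (x₃ + w₁)) :=
  le_antisymm (max_add_le_max_add_of_max_eq_max hx hw) <|
    max_add_le_max_add_of_max_eq_max (by rwa [max_comm x₂, max_comm x₄])
      (by rwa [max_comm w₂, max_comm w₄])

end MaxPlus

theorem riccati_implies_painleve_yy_general (Q A₂ A₃ A₄ B₁ B₂ B₃ B₄ : ℝ) (m : ℤ)
    (Ym Ym1 Zm1 : ℝ)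
    (h2 : A₂ + B₄ = A₄ + B₂)
    (hR1 : max ((m : ℝ) * Q + A₂ + B₄) (Ym + Zm1) = max (Zm1 + A₄) (Ym + B₄))
    (hR2 : max ((m : ℝ) * Q + A₃ + B₁) (Ym1 + Zm1) = max (Zm1 + A₃) (Ym1 + B₃)) :
    max (max (2 * Zm1) (B₃ + B₄) + Ym + Ym1)
        (max B₁ B₂ + (m : ℝ) * Q + Zm1 + A₃ + A₄) =
      max (max (2 * (m : ℝ) * Q + B₁ + B₂) (2 * Zm1) + A₃ + A₄)
        (max B₃ B₄ + Ym + Ym1 + Zm1) := by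
  have key := max_add_eq_max_add_of_max_eq_max hR1 hR2
  have hL₁ : max (2 * Zm1) (B₃ + B₄) + Ym + Ym1 =
      max ((Ym + Zm1) + (Ym1 + Zm1)) ((Ym + B₄) + (Ym1 + B₃)) := by
    simp only [← max_add_add_right]; congr 1 <;> ring
  have hL₂ : max B₁ B₂ + (m : ℝ) * Q + Zm1 + A₃ + A₄ =
      max ((Zm1 + A₄) + ((m : ℝ) * Q + A₃ + B₁)) (((m : ℝ) * Q + A₂ + B₄) + (Zm1 + A₃)) := by
    simp only [← max_add_add_right]; congr 1 <;> linarith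
  have hR₁ : max (2 * (m : ℝ) * Q + B₁ + B₂) (2 * Zm1) + A₃ + A₄ =
      max (((m : ℝ) * Q + A₂ + B₄) + ((m : ℝ) * Q + A₃ + B₁)) ((Zm1 + A₄) + (Zm1 + A₃)) := by
    simp only [← max_add_add_right]; congr 1 <;> linarith
  have hR₂ : max B₃ B₄ + Ym + Ym1 + Zm1 =
      max ((Ym + Zm1) + (Ym1 + B₃)) ((Ym + B₄) + (Ym1 + Zm1)) := by
    simp only [← max_add_add_right]; congr 1 <;> ring
  rw [hL₁, hL₂, hR₁, hR₂, max_comm (Zm1 + A₄ + _)]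
  exact key.symm

theorem riccati_implies_painleve_yy (Q A₁ A₂ A₃ A₄ B₁ B₂ B₃ B₄ : ℝ) (m : ℤ)
    (Ym Ym1 Zm1 : ℝ)
    (h1 : A₁ + B₃ + Q = A₃ + B₁) (h2 : A₂ + B₄ = A₄ + B₂)
    (hR1 : max ((m : ℝ) * Q + A₂ + B₄) (Ym + Zm1) = max (Zm1 + A₄) (Ym + B₄))
    (hR2 : max ((m : ℝ) * Q + A₃ + B₁) (Ym1 + Zm1) = max (Zm1 + A₃) (Ym1 + B₃)) :
    max (max (2 * Zm1) (B₃ + B₄) + Ym + Ym1)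
        (max B₁ B₂ + (m : ℝ) * Q + Zm1 + A₃ + A₄) =
      max (max (2 * (m : ℝ) * Q + B₁ + B₂) (2 * Zm1) + A₃ + A₄)
        (max B₃ B₄ + Ym + Ym1 + Zm1) :=
  riccati_implies_painleve_yy_general Q A₂ A₃ A₄ B₁ B₂ B₃ B₄ m Ym Ym1 Zm1 h2 hR1 hR2
end

section
/- Suppose Q > 0, A₁ + B₃ + Q = A₃ + B₁ and A₂ + B₄ = A₄ + B₂, and set h = A₃ + B₁ − A₂ − B₄. Fix a real constant c and an integer m, and suppose h·m ≥ A₄ − c, (Q−h)·m ≥ c − A₂, h·(m+1) ≥ A₃ − c, and (Q−h)·(m+1) ≥ c − A₁. Then Y_m = h·m + c, Y_{m+1} = h·(m+1) + c and Z_{m+1} = (Q−h)·m + A₂ + B₄ − c satisfy the ultradiscrete Riccati-type equations max(mQ + A₂, Y_m) + B₄ = Z_{m+1} + max(A₄, Y_m) and max((m+1)Q + A₁, Y_{m+1}) + B₃ = Z_{m+1} + max(A₃, Y_{m+1}). -/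
/-!
The four inequalities say exactly which argument of each `max` is the larger one: the
`Q`-terms win on the left and the linear solution `h * m + c` (resp. `h * (m + 1) + c`)
wins on the right. Once the maxima are resolved, the first equation is an identity and the
second reduces to the constraint `A₁ + B₃ + Q = A₃ + B₁` through the definition of `h`.
-/

theorem max_add_eq_add_max_of_le {α : Type*} [LinearOrder α] [Add α] {a b c d x y : α}
    (hba : b ≤ a) (hcd : c ≤ d) (h : a + x = y + d) : max a b + x = y + max c d := by
  rw [max_eq_left hba, max_eq_right hcd, h]

theorem riccati_linear_solution_h_general (Q A₁ A₂ A₃ A₄ B₁ B₃ B₄ c : ℝ) (m : ℤ)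
    (h1 : A₁ + B₃ + Q = A₃ + B₁)
    (h : ℝ) (hh : h = A₃ + B₁ - A₂ - B₄)
    (i1 : h * m ≥ A₄ - c) (i2 : (Q - h) * m ≥ c - A₂)
    (i3 : h * (m + 1) ≥ A₃ - c) (i4 : (Q - h) * (m + 1) ≥ c - A₁) :
    (max ((m : ℝ) * Q + A₂) (h * m + c) + B₄ =
        ((Q - h) * m + A₂ + B₄ - c) + max A₄ (h * m + c)) ∧
    (max (((m : ℝ) + 1) * Q + A₁) (h * (m + 1) + c) + B₃ =
        ((Q - h) * m + A₂ + B₄ - c) + max A₃ (h * (m + 1) + c)) :=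
  ⟨max_add_eq_add_max_of_le (by linarith) (by linarith) (by ring),
    max_add_eq_add_max_of_le (by linarith) (by linarith) (by linarith)⟩

theorem riccati_linear_solution_h (Q A₁ A₂ A₃ A₄ B₁ B₂ B₃ B₄ c : ℝ) (m : ℤ)
    (hQ : 0 < Q) (h1 : A₁ + B₃ + Q = A₃ + B₁) (h2 : A₂ + B₄ = A₄ + B₂)
    (h : ℝ) (hh : h = A₃ + B₁ - A₂ - B₄)
    (i1 : h * m ≥ A₄ - c) (i2 : (Q - h) * m ≥ c - A₂)
    (i3 : h * (m + 1) ≥ A₃ - c) (i4 : (Q - h) * (m + 1) ≥ c - A₁) :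
    (max ((m : ℝ) * Q + A₂) (h * m + c) + B₄ =
        ((Q - h) * m + A₂ + B₄ - c) + max A₄ (h * m + c)) ∧
    (max (((m : ℝ) + 1) * Q + A₁) (h * (m + 1) + c) + B₃ =
        ((Q - h) * m + A₂ + B₄ - c) + max A₃ (h * (m + 1) + c)) :=
  riccati_linear_solution_h_general Q A₁ A₂ A₃ A₄ B₁ B₃ B₄ c m h1 h hh i1 i2 i3 i4
end

section
/- Suppose real numbers satisfy the constraint B₃ + B₄ + A₁ + A₂ = Q + A₃ + A₄ + B₁ + B₂. Let α′, β′, γ′ be reals with 0 ≤ α′ ≤ Q, α′ + 2(γ′ − β′) = B₃ + B₄ − A₃ − A₄, and suppose for an integer m: α′(m+1) + γ′ ≤ min(B₃, B₄), α′·m + β′ ≤ min(A₃, A₄), (Q−α′)·m + max(B₁, B₂) ≤ α′ + γ′, and (Q−α′)·m + max(A₁, A₂) ≤ β′. Then Y_m = α′m + β′, Y_{m+1} = α′(m+1) + β′, Z_m = α′m + γ′, Z_{m+1} = α′(m+1) + γ′ satisfy both equations: Z_m + Z_{m+1} + max(A₃, Y_m) + max(A₄, Y_m) = B₃ + B₄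 + max(mQ + A₁, Y_m) + max(mQ + A₂, Y_m), and Y_m + Y_{m+1} + max(B₃, Z_{m+1}) + max(B₄, Z_{m+1}) = A₃ + A₄ + max(mQ + B₁, Z_{m+1}) + max(mQ + B₂, Z_{m+1}). -/
/-! The ansatz is chosen so that the inequalities in the hypotheses decide every `max`:
`Y_m` lies below `A₃, A₄` and above `mQ + A₁, mQ + A₂`, and `Z_{m+1}` lies below `B₃, B₄` and
above `mQ + B₁, mQ + B₂`. Both equations then become linear, and each reduces to the balance
condition `α' + 2(γ' - β') = B₃ + B₄ - A₃ - A₄`. -/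

section MaxPair

variable {α : Type*} [LinearOrder α] [Add α] {a b x : α}

theorem max_add_max_eq_add_of_le_min (h : x ≤ min a b) : max a x + max b x = a + b := by
  rw [max_eq_left (h.trans (min_le_left a b)), max_eq_left (h.trans (min_le_right a b))]

theorem max_add_max_eq_of_max_le (h : max a b ≤ x) : max a x + max b x = x + x := by
  rw [max_eq_right ((le_max_left a b).trans h), max_eq_right ((le_max_right a b).trans h)]

end MaxPair

theorem udP6_linear_solution'_general (Q A₁ A₂ A₃ A₄ B₁ B₂ B₃ B₄ α' β' γ' : ℝ) (m : ℤ)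
    (hsum : α' + 2 * (γ' - β') = B₃ + B₄ - A₃ - A₄)
    (i1 : α' * (m + 1) + γ' ≤ min B₃ B₄) (i2 : α' * m + β' ≤ min A₃ A₄)
    (i3 : (Q - α') * m + max B₁ B₂ ≤ α' + γ') (i4 : (Q - α') * m + max A₁ A₂ ≤ β') :
    ((α' * m + γ') + (α' * (m + 1) + γ') + max A₃ (α' * m + β') + max A₄ (α' * m + β')
        = B₃ + B₄ + max ((m : ℝ) * Q + A₁) (α' * m + β')
            + max ((m : ℝ) * Q + A₂) (α' * m + β')) ∧
    ((α' * m + β') + (α' * (m + 1) + β')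
        + max B₃ (α' * (m + 1) + γ') + max B₄ (α' * (m + 1) + γ')
        = A₃ + A₄ + max ((m : ℝ) * Q + B₁) (α' * (m + 1) + γ')
            + max ((m : ℝ) * Q + B₂) (α' * (m + 1) + γ')) := by
  have hA := max_add_max_eq_add_of_le_min i2
  have hB := max_add_max_eq_add_of_le_min i1
  have hA' : max ((m : ℝ) * Q + A₁) (α' * m + β') + max ((m : ℝ) * Q + A₂) (α' * m + β')
      = (α' * m + β') + (α' * m + β') :=
    max_add_max_eq_of_max_le (by rw [max_add_add_left]; linarith)
  have hB' : max ((m : ℝ) * Q + B₁) (α' * (m + 1) + γ')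
      + max ((m : ℝ) * Q + B₂) (α' * (m + 1) + γ') = (α' * (m + 1) + γ') + (α' * (m + 1) + γ') :=
    max_add_max_eq_of_max_le (by rw [max_add_add_left]; linarith)
  constructor <;> linarith

theorem udP6_linear_solution' (Q A₁ A₂ A₃ A₄ B₁ B₂ B₃ B₄ α' β' γ' : ℝ) (m : ℤ)
    (hcon : B₃ + B₄ + A₁ + A₂ = Q + A₃ + A₄ + B₁ + B₂)
    (hα0 : 0 ≤ α') (hαQ : α' ≤ Q)
    (hsum : α' + 2 * (γ' - β') = B₃ + B₄ - A₃ - A₄)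
    (i1 : α' * (m + 1) + γ' ≤ min B₃ B₄) (i2 : α' * m + β' ≤ min A₃ A₄)
    (i3 : (Q - α') * m + max B₁ B₂ ≤ α' + γ') (i4 : (Q - α') * m + max A₁ A₂ ≤ β') :
    ((α' * m + γ') + (α' * (m + 1) + γ') + max A₃ (α' * m + β') + max A₄ (α' * m + β')
        = B₃ + B₄ + max ((m : ℝ) * Q + A₁) (α' * m + β')
            + max ((m : ℝ) * Q + A₂) (α' * m + β')) ∧
    ((α' * m + β') + (α' * (m + 1) + β')
        + max B₃ (α' * (m + 1) + γ') + max B₄ (α' * (m + 1) + γ')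
        = A₃ + A₄ + max ((m : ℝ) * Q + B₁) (α' * (m + 1) + γ')
            + max ((m : ℝ) * Q + B₂) (α' * (m + 1) + γ')) :=
  udP6_linear_solution'_general Q A₁ A₂ A₃ A₄ B₁ B₂ B₃ B₄ α' β' γ' m hsum i1 i2 i3 i4
end

section
/- With parameters A₁=25, A₂=46, A₃=67, A₄=23, B₁=59, B₂=65, B₃=1, B₄=42, Q=100 (so h = A₃+B₁−A₂−B₄ = 38 and h′ = A₃−A₄−B₃+B₄ = 85), and any constant c with 31 ≤ c ≤ 46, the sequences Y_m = h′·m + c for m ≤ 0, Y_m = h·m + c for m ≥ 1, Z_m = h′·m + B₃ − A₃ + c for m ≤ 0, Z_m = (Q−h)·m + A₁ + B₃ − c for m ≥ 1, satisfy for every integer m the ultradiscrete Riccati-type equations max(mQ + A₂, Y_m) + B₄ = Z_{m+1} + max(A₄, Y_m) and max((m+1)Q + A₁, Y_{m+1}) + B₃ = Z_{m+1} + max(A₃, Y_{m+1}). -/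
/-!
For `m < 0` both `Y m` and `Y (m + 1)` lie between the two constants they are compared with
(`Y` dominates the `mQ` term and is dominated by `A₄`, resp. `A₃`), while for `m ≥ 0` the order is
reversed. The bounds `31 ≤ c ≤ 46` are exactly what fixes these orders, after which each equation
is a linear identity in `m` and `c`.
-/

section MaxAdd

variable {α : Type*} [LinearOrder α] [Add α] {p q y r z : α}

theorem max_add_eq_add_max_iff_of_le_of_le (hp : p ≤ y) (hq : y ≤ q) :
    max p y + r = z + max q y ↔ y + r = z + q := by
  rw [max_eq_right hp, max_eq_left hq]

theorem max_add_eq_add_max_iff_of_ge_of_ge (hp : y ≤ p) (hq : q ≤ y) :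
    max p y + r = z + max q y ↔ p + r = z + y := by
  rw [max_eq_left hp, max_eq_right hq]

end MaxAdd

theorem riccati_example_solution (c : ℝ) (hc1 : 31 ≤ c) (hc2 : c ≤ 46)
    (Y Z : ℤ → ℝ)
    (hY1 : ∀ m : ℤ, m ≤ 0 → Y m = 85 * m + c)
    (hY2 : ∀ m : ℤ, 1 ≤ m → Y m = 38 * m + c)
    (hZ1 : ∀ m : ℤ, m ≤ 0 → Z m = 85 * m + 1 - 67 + c)
    (hZ2 : ∀ m : ℤ, 1 ≤ m → Z m = (100 - 38) * m + 25 + 1 - c) :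
    ∀ m : ℤ,
      (max ((m : ℝ) * 100 + 46) (Y m) + 42 = Z (m + 1) + max 23 (Y m)) ∧
      (max (((m : ℝ) + 1) * 100 + 25) (Y (m + 1)) + 1 = Z (m + 1) + max 67 (Y (m + 1))) := by
  intro m
  rcases lt_or_ge m 0 with hm | hm
  · have hm' : (m : ℝ) ≤ -1 := by exact_mod_cast Int.le_sub_one_of_lt hm
    rw [hY1 m hm.le, hY1 (m + 1) (by omega), hZ1 (m + 1) (by omega)]
    push_cast
    constructor
    · rw [max_add_eq_add_max_iff_of_le_of_le (by linarith) (by linarith)]; ring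
    · rw [max_add_eq_add_max_iff_of_le_of_le (by linarith) (by linarith)]; ring
  · have hY0 : ∀ n : ℤ, 0 ≤ n → Y n = 38 * n + c := fun n hn => by
      rcases hn.eq_or_lt with rfl | hn
      · simpa using hY1 0 le_rfl
      · exact hY2 n hn
    have hm' : (0 : ℝ) ≤ m := by exact_mod_cast hm
    rw [hY0 m hm, hY0 (m + 1) (by omega), hZ2 (m + 1) (by omega)]
    push_cast
    constructor
    · rw [max_add_eq_add_max_iff_of_ge_of_ge (by linarith) (by linarith)]; ring
    · rw [max_add_eq_add_max_iff_of_ge_of_ge (by linarith) (by linarith)]; ring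
end

section
/- With parameters A₁=32, A₂=33, A₃=37, A₄=22, B₁=53, B₂=65, B₃=8, B₄=4, Q=100, the sequences Y_m = 95m + 111 for m ≤ −1, Y₀ = 43, Y_m = 11m + 111 for m ≥ 1, and Z_m = 95m + 40 for m ≤ 0, Z_m = 89m − 117 for m ≥ 1, satisfy for every integer m the ultradiscrete Painlevé VI system without parity variables: Z_m + Z_{m+1} + max(A₃, Y_m) + max(A₄, Y_m) = B₃ + B₄ + max(mQ + A₁, Y_m) + max(mQ + A₂, Y_m), and Y_m + Y_{m+1} + max(B₃, Z_{m+1}) + max(B₄, Z_{m+1}) = A₃ + A₄ + max(mQ + B₁, Z_{m+1}) + max(mQ + B₂, Z_{m+1}). -/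
/-!
For `m ≤ -2` and for `m ≥ 1` each `max` is decided by the sign of `m`, so both equations become
identities between linear functions of `m`. The two transition steps `m = -1, 0`, where `Y₀ = 43`
breaks the pattern, are checked numerically.
-/

lemma udP6_linear_eqs_of_le_neg_two {x : ℝ} (hx : x ≤ -2) :
    ((95 * x + 40) + (95 * (x + 1) + 40) + max 37 (95 * x + 111) + max 22 (95 * x + 111)
        = 8 + 4 + max (x * 100 + 32) (95 * x + 111) + max (x * 100 + 33) (95 * x + 111)) ∧
      ((95 * x + 111) + (95 * (x + 1) + 111) + max 8 (95 * (x + 1) + 40)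
          + max 4 (95 * (x + 1) + 40)
        = 37 + 22 + max (x * 100 + 53) (95 * (x + 1) + 40)
            + max (x * 100 + 65) (95 * (x + 1) + 40)) := by
  constructor <;> simp only [max_def] <;> split_ifs <;> linarith

lemma udP6_linear_eqs_of_one_le {x : ℝ} (hx : 1 ≤ x) :
    ((89 * x - 117) + (89 * (x + 1) - 117) + max 37 (11 * x + 111) + max 22 (11 * x + 111)
        = 8 + 4 + max (x * 100 + 32) (11 * x + 111) + max (x * 100 + 33) (11 * x + 111)) ∧
      ((11 * x + 111) + (11 * (x + 1) + 111) + max 8 (89 * (x + 1) - 117)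
          + max 4 (89 * (x + 1) - 117)
        = 37 + 22 + max (x * 100 + 53) (89 * (x + 1) - 117)
            + max (x * 100 + 65) (89 * (x + 1) - 117)) := by
  constructor <;> simp only [max_def] <;> split_ifs <;> linarith

theorem udP6_example_solution
    (Y Z : ℤ → ℝ)
    (hY1 : ∀ m : ℤ, m ≤ -1 → Y m = 95 * m + 111)
    (hY0 : Y 0 = 43)
    (hY2 : ∀ m : ℤ, 1 ≤ m → Y m = 11 * m + 111)
    (hZ1 : ∀ m : ℤ, m ≤ 0 → Z m = 95 * m + 40)
    (hZ2 : ∀ m : ℤ, 1 ≤ m → Z m = 89 * m - 117) :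
    ∀ m : ℤ,
      (Z m + Z (m + 1) + max 37 (Y m) + max 22 (Y m)
        = 8 + 4 + max ((m : ℝ) * 100 + 32) (Y m) + max ((m : ℝ) * 100 + 33) (Y m)) ∧
      (Y m + Y (m + 1) + max 8 (Z (m + 1)) + max 4 (Z (m + 1))
        = 37 + 22 + max ((m : ℝ) * 100 + 53) (Z (m + 1))
            + max ((m : ℝ) * 100 + 65) (Z (m + 1))) := by
  intro m
  obtain hm | rfl | rfl | hm : m ≤ -2 ∨ m = -1 ∨ m = 0 ∨ 1 ≤ m := by omega
  · rw [hY1 m (by omega), hY1 (m + 1) (by omega), hZ1 m (by omega), hZ1 (m + 1) (by omega)]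
    push_cast
    exact udP6_linear_eqs_of_le_neg_two (by exact_mod_cast hm)
  · rw [show (-1 : ℤ) + 1 = 0 from rfl, hY1 (-1) le_rfl, hY0, hZ1 (-1) (by omega), hZ1 0 le_rfl]
    norm_num
  · rw [show (0 : ℤ) + 1 = 1 from rfl, hY0, hY2 1 le_rfl, hZ1 0 le_rfl, hZ2 1 le_rfl]
    norm_num
  · rw [hY2 m hm, hY2 (m + 1) (by omega), hZ2 m hm, hZ2 (m + 1) (by omega)]
    push_cast
    exact udP6_linear_eqs_of_one_le (by exact_mod_cast hm)
end

section
/- Let m ∈ ℤ and suppose A₂ + B₄ ≤ A₃ + B₁, B₁ ≤ B₂, and mQ ≥ max(A₂ + B₄ − A₁ − B₁, B₄ − B₁). Then Y_{m+1} = A₂ + B₄ − B₁ and Z_{m+1} = mQ + B₁ satisfy the ultradiscrete Riccati-type equation (with parities 𝔶_{m+1} = −1, 𝔷_{m+1} = +1): max((m+1)Q + A₁, Y_{m+1}) + B₃ = Z_{m+1} + max(A₃, Y_{m+1}), assuming additionally the parameter relation A₁ + B₃ + Q = A₃ + B₁. -/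
theorem riccati_constant_solution_general (Q A₁ A₂ A₃ B₁ B₃ B₄ : ℝ) (m : ℤ)
    (hQ : 0 < Q)
    (h1 : A₂ + B₄ ≤ A₃ + B₁)
    (h3 : (m : ℝ) * Q ≥ max (A₂ + B₄ - A₁ - B₁) (B₄ - B₁))
    (hrel : A₁ + B₃ + Q = A₃ + B₁) :
    max (((m : ℝ) + 1) * Q + A₁) (A₂ + B₄ - B₁) + B₃ =
      ((m : ℝ) * Q + B₁) + max A₃ (A₂ + B₄ - B₁) := by
  have hY_le_A₃ : A₂ + B₄ - B₁ ≤ A₃ := by linarith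
  have hY_le : A₂ + B₄ - B₁ ≤ ((m : ℝ) + 1) * Q + A₁ := by
    have := (le_max_left _ _).trans h3
    linarith
  rw [max_eq_left hY_le, max_eq_left hY_le_A₃]
  linarith

theorem riccati_constant_solution (Q A₁ A₂ A₃ B₁ B₂ B₃ B₄ : ℝ) (m : ℤ)
    (hQ : 0 < Q)
    (h1 : A₂ + B₄ ≤ A₃ + B₁) (h2 : B₁ ≤ B₂)
    (h3 : (m : ℝ) * Q ≥ max (A₂ + B₄ - A₁ - B₁) (B₄ - B₁))
    (hrel : A₁ + B₃ + Q = A₃ + B₁) :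
    max (((m : ℝ) + 1) * Q + A₁) (A₂ + B₄ - B₁) + B₃ =
      ((m : ℝ) * Q + B₁) + max A₃ (A₂ + B₄ - B₁) :=
  riccati_constant_solution_general Q A₁ A₂ A₃ B₁ B₃ B₄ m hQ h1 h3 hrel
end

section
/- Let m ∈ ℤ and suppose A₃ ≥ A₄, B₃ ≤ B₄, mQ ≤ min(A₃ − A₂, B₄ − B₁), and the parameter relations A₁ + B₃ + Q = A₃ + B₁ and A₂ + B₄ = A₄ + B₂ hold. Then Y_{m+1} = A₃ and Z_{m+1} = B₄ satisfy both ultradiscrete Riccati-type relations in the parity case 𝔶_{m+1} = +1, 𝔷_{m+1} = +1: specifically max(mQ + A₃ + B₁, Y_{m+1} + Z_{m+1}) = max(Z_{m+1} + A₃, Y_{m+1} + B₃). -/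
theorem riccati_constant_solution_plus_general (Q A₂ A₃ B₁ B₃ B₄ : ℝ) (m : ℤ)
    (h2 : B₃ ≤ B₄)
    (h3 : (m : ℝ) * Q ≤ min (A₃ - A₂) (B₄ - B₁)) :
    max ((m : ℝ) * Q + A₃ + B₁) (A₃ + B₄) = max (B₄ + A₃) (A₃ + B₃) := by
  have hmQ : (m : ℝ) * Q ≤ B₄ - B₁ := h3.trans (min_le_right _ _)
  calc max ((m : ℝ) * Q + A₃ + B₁) (A₃ + B₄) = A₃ + B₄ := max_eq_right (by linarith)
    _ = max (B₄ + A₃) (A₃ + B₃) := by rw [max_eq_left (by linarith)]; ring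

theorem riccati_constant_solution_plus (Q A₁ A₂ A₃ A₄ B₁ B₂ B₃ B₄ : ℝ) (m : ℤ)
    (hQ : 0 < Q)
    (h1 : A₄ ≤ A₃) (h2 : B₃ ≤ B₄)
    (h3 : (m : ℝ) * Q ≤ min (A₃ - A₂) (B₄ - B₁))
    (hrel1 : A₁ + B₃ + Q = A₃ + B₁) (hrel2 : A₂ + B₄ = A₄ + B₂) :
    max ((m : ℝ) * Q + A₃ + B₁) (A₃ + B₄) = max (B₄ + A₃) (A₃ + B₃) :=
  riccati_constant_solution_plus_general Q A₂ A₃ B₁ B₃ B₄ m h2 h3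
end
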